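/- Let n ≥ 3 be an integer and ε ∈ (0,1) with (1−ε)⁴ > (n−2)/n. Let D > 0 and let f : [0,D] → ℝ be twice continuously differentiable with f(0) = 0, f(D) = 0, f'(0) = 1, f'(D) = −1, and f(s) > 0 for all s ∈ (0,D). Suppose that for every s ∈ (0,D) one has (n−1)(n−2)·(1−f'(s)²)/f(s)² − 2(n−1)·f''(s)/f(s) ≥ n(n−1)(1−ε)², and that every s ∈ (0,D) with f'(s) = 0 satisfies f(s) ≥ 1−ε. Then there exists exactly one s₀ ∈ (0,D) with f'(s₀) = 0, and moreover f''(s₀) < 0. -/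

import Mathlib

/-!
At a critical point (`f' = 0`, `f ≥ 1 - ε`) the scalar curvature bound reads
`n (1 - ε)² f² ≤ (n - 2) - 2 f f''`; since `f² ≥ (1 - ε)²` and `n (1 - ε)⁴ > n - 2`,
this forces `f'' < 0`. Hence every critical point of `f` in `(0, D)` is a strict local
maximum, and two of them would enclose a minimum of `f`, itself a critical point: impossible.
Existence is the intermediate value theorem for `f'`, which runs from `1` to `-1`.
-/

open Set Filter Topology

/-- Scalar curvature of `ds² + f(s)² g_round` on an `n`-dimensional sphere, at a point where
`f, f', f''` take the values `f₀, f₁, f₂`. -/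
noncomputable def warpedScal (n f₀ f₁ f₂ : ℝ) : ℝ :=
  (n - 1) * (n - 2) * (1 - f₁ ^ 2) / f₀ ^ 2 - 2 * (n - 1) * f₂ / f₀

lemma neg_of_le_warpedScal {n a f₀ f₂ : ℝ} (hn : 1 < n) (ha : 0 < a) (haf : a ≤ f₀)
    (hgap : (n - 2) / n < a ^ 4) (hscal : n * (n - 1) * a ^ 2 ≤ warpedScal n f₀ 0 f₂) :
    f₂ < 0 := by
  have hf₀ : 0 < f₀ := ha.trans_le haf
  have hgap' : n - 2 < a ^ 4 * n := (div_lt_iff₀ (by linarith)).mp hgap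
  have hcleared : n * a ^ 2 * f₀ ^ 2 ≤ n - 2 - 2 * f₂ * f₀ := by
    have hformula : warpedScal n f₀ 0 f₂ = (n - 1) * (n - 2 - 2 * f₂ * f₀) / f₀ ^ 2 := by
      unfold warpedScal
      field_simp
      ring
    rw [hformula, le_div_iff₀ (by positivity)] at hscal
    exact le_of_mul_le_mul_left (by linarith) (by linarith : 0 < n - 1)
  by_contra! hf₂
  have hsq : a ^ 2 ≤ f₀ ^ 2 := pow_le_pow_left₀ ha.le haf 2
  nlinarith [mul_nonneg hf₂ hf₀.le,
    mul_le_mul_of_nonneg_left hsq (by positivity : 0 ≤ n * a ^ 2)]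

lemma eventually_nhdsNE_lt_of_deriv_deriv_neg {f f' : ℝ → ℝ} {x₀ f''₀ : ℝ}
    (hf : ∀ᶠ x in 𝓝 x₀, HasDerivAt f (f' x) x) (hf' : HasDerivAt f' f''₀ x₀)
    (h₀ : f' x₀ = 0) (hneg : f''₀ < 0) : ∀ᶠ x in 𝓝[≠] x₀, f x < f x₀ := by
  have hsign := eventually_nhdsWithin_sign_eq_of_deriv_neg (by rwa [hf'.deriv]) h₀
  obtain ⟨a, b, hx₀, hab⟩ := mem_nhds_iff_exists_Ioo_subset.mp (hf.and hsign)
  refine eventually_nhdsWithin_iff.mpr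
    (eventually_of_mem (Ioo_mem_nhds hx₀.1 hx₀.2) fun x hx (hne : x ≠ x₀) => ?_)
  have hderiv {y z} (hy : a < y) (hz : z < b) : ∀ t ∈ Ioo y z, HasDerivAt f (f' t) t :=
    fun t ht => (hab ⟨hy.trans ht.1, ht.2.trans hz⟩).1
  have hcont {y z} (hy : a < y) (hz : z < b) : ContinuousOn f (Icc y z) :=
    fun t ht => (hab ⟨hy.trans_le ht.1, ht.2.trans_lt hz⟩).1.continuousAt.continuousWithinAt
  rcases hne.lt_or_gt with hlt | hgt
  · obtain ⟨c, hc, hslope⟩ := exists_hasDerivAt_eq_slope f f' hlt (hcont hx.1 hx₀.2)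
      (hderiv hx.1 hx₀.2)
    have hpos : 0 < f' c := by
      rw [← sign_eq_one_iff, (hab ⟨hx.1.trans hc.1, hc.2.trans hx₀.2⟩).2, sign_eq_one_iff]
      exact sub_pos.mpr hc.2
    rw [hslope] at hpos
    linarith [(lt_div_iff₀ (sub_pos.mpr hlt)).mp hpos]
  · obtain ⟨c, hc, hslope⟩ := exists_hasDerivAt_eq_slope f f' hgt (hcont hx₀.1 hx.2)
      (hderiv hx₀.1 hx.2)
    have hneg' : f' c < 0 := by
      rw [← sign_eq_neg_one_iff, (hab ⟨hx₀.1.trans hc.1, hc.2.trans hx.2⟩).2,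
        sign_eq_neg_one_iff]
      exact sub_neg.mpr hc.1
    rw [hslope] at hneg'
    linarith [(div_lt_iff₀ (sub_pos.mpr hgt)).mp hneg']

lemma subsingleton_deriv_eq_zero_of_strict_local_max {f f' : ℝ → ℝ} {s : Set ℝ}
    (hs : s.OrdConnected) (hf : ∀ x ∈ s, HasDerivAt f (f' x) x)
    (hmax : ∀ x ∈ s, f' x = 0 → ∀ᶠ y in 𝓝[≠] x, f y < f x) :
    {x ∈ s | f' x = 0}.Subsingleton := by
  intro x ⟨hxs, hx⟩ y ⟨hys, hy⟩
  wlog hxy : x < y generalizing x y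
  · rcases (not_lt.mp hxy).lt_or_eq with hyx | hyx
    exacts [(this hys hy hxs hx hyx).symm, hyx.symm]
  have hsub : Icc x y ⊆ s := hs.out hxs hys
  obtain ⟨c, hc, hmin⟩ := isCompact_Icc.exists_isMinOn (nonempty_Icc.mpr hxy.le)
    fun t ht => (hf t (hsub ht)).continuousAt.continuousWithinAt
  have hc₀ : f' c = 0 := by
    rcases hc.1.eq_or_lt with rfl | hxc
    · exact hx
    rcases hc.2.eq_or_lt with rfl | hcy
    · exact hy
    exact (hmin.isLocalMin (Icc_mem_nhds hxc hcy)).hasDerivAt_eq_zero (hf c (hsub hc))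
  have hlt := hmax c (hsub hc) hc₀
  obtain ⟨t, hft, ht⟩ : ∃ t, f t < f c ∧ t ∈ Icc x y := by
    rcases hc.2.lt_or_eq with hcy | rfl
    · obtain ⟨t, hft, ht⟩ :=
        ((hlt.filter_mono (nhdsGT_le_nhdsNE c)).and (Ioo_mem_nhdsGT hcy)).exists
      exact ⟨t, hft, hc.1.trans ht.1.le, ht.2.le⟩
    · obtain ⟨t, hft, ht⟩ :=
        ((hlt.filter_mono (nhdsLT_le_nhdsNE c)).and (Ioo_mem_nhdsLT hxy)).exists
      exact ⟨t, hft, ht.1.le, ht.2.le⟩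
  exact absurd hft (hmin ht).not_gt

theorem unique_minimal_leaf_general (n : ℕ) (hn : 3 ≤ n) (ε : ℝ) (hε : ε ∈ Set.Ioo (0 : ℝ) 1)
    (hεn : ((n : ℝ) - 2) / (n : ℝ) < (1 - ε) ^ 4)
    (D : ℝ) (hD : 0 < D) (f f' f'' : ℝ → ℝ)
    (hderiv1 : ∀ s ∈ Set.Icc (0 : ℝ) D, HasDerivWithinAt f (f' s) (Set.Icc (0 : ℝ) D) s)
    (hderiv2 : ∀ s ∈ Set.Icc (0 : ℝ) D, HasDerivWithinAt f' (f'' s) (Set.Icc (0 : ℝ) D) s)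
    (hf'0 : f' 0 = 1) (hf'D : f' D = -1)
    (hscal : ∀ s ∈ Set.Ioo (0 : ℝ) D,
      (n : ℝ) * ((n : ℝ) - 1) * (1 - ε) ^ 2 ≤
        ((n : ℝ) - 1) * ((n : ℝ) - 2) * (1 - (f' s) ^ 2) / (f s) ^ 2
          - 2 * ((n : ℝ) - 1) * (f'' s) / (f s))
    (hminA : ∀ s ∈ Set.Ioo (0 : ℝ) D, f' s = 0 → 1 - ε ≤ f s) :
    ∃ s₀ ∈ Set.Ioo (0 : ℝ) D, f' s₀ = 0 ∧ f'' s₀ < 0 ∧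
      ∀ s ∈ Set.Ioo (0 : ℝ) D, f' s = 0 → s = s₀ := by
  have hderivAt₁ : ∀ s ∈ Ioo 0 D, HasDerivAt f (f' s) s := fun s hs =>
    (hderiv1 s (Ioo_subset_Icc_self hs)).hasDerivAt (Icc_mem_nhds hs.1 hs.2)
  have hderivAt₂ : ∀ s ∈ Ioo 0 D, HasDerivAt f' (f'' s) s := fun s hs =>
    (hderiv2 s (Ioo_subset_Icc_self hs)).hasDerivAt (Icc_mem_nhds hs.1 hs.2)
  have hunstable : ∀ s ∈ Ioo 0 D, f' s = 0 → f'' s < 0 := fun s hs h₀ => by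
    have h := hscal s hs
    rw [h₀] at h
    exact neg_of_le_warpedScal (by exact_mod_cast (by omega : 1 < n)) (by linarith [hε.2])
      (hminA s hs h₀) hεn h
  obtain ⟨s₀, hs₀, hs₀'⟩ : ∃ s₀ ∈ Ioo 0 D, f' s₀ = 0 :=
    intermediate_value_Ioo' hD.le (fun s hs => (hderiv2 s hs).continuousWithinAt)
      (by simp [hf'0, hf'D])
  refine ⟨s₀, hs₀, hs₀', hunstable s₀ hs₀ hs₀', fun s hs h₀ => ?_⟩
  refine subsingleton_deriv_eq_zero_of_strict_local_max ordConnected_Ioo hderivAt₁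
    (fun x hx hx₀ => ?_) ⟨hs, h₀⟩ ⟨hs₀, hs₀'⟩
  exact eventually_nhdsNE_lt_of_deriv_deriv_neg
    (eventually_of_mem (Ioo_mem_nhds hx.1 hx.2) hderivAt₁) (hderivAt₂ x hx) hx₀
    (hunstable x hx hx₀)

/-- Uniqueness of the minimal leaf: near-extremal scalar curvature and MinA bounds force
the canonical sweepout of a rotationally symmetric `n`-sphere to contain exactly one
minimal hypersurface, which is unstable. -/
theorem unique_minimal_leaf (n : ℕ) (hn : 3 ≤ n) (ε : ℝ) (hε : ε ∈ Set.Ioo (0 : ℝ) 1)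
    (hεn : ((n : ℝ) - 2) / (n : ℝ) < (1 - ε) ^ 4)
    (D : ℝ) (hD : 0 < D) (f f' f'' : ℝ → ℝ)
    (hderiv1 : ∀ s ∈ Set.Icc (0 : ℝ) D, HasDerivWithinAt f (f' s) (Set.Icc (0 : ℝ) D) s)
    (hderiv2 : ∀ s ∈ Set.Icc (0 : ℝ) D, HasDerivWithinAt f' (f'' s) (Set.Icc (0 : ℝ) D) s)
    (hcont : ContinuousOn f'' (Set.Icc (0 : ℝ) D))
    (hf0 : f 0 = 0) (hfD : f D = 0) (hf'0 : f' 0 = 1) (hf'D : f' D = -1)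
    (hpos : ∀ s ∈ Set.Ioo (0 : ℝ) D, 0 < f s)
    (hscal : ∀ s ∈ Set.Ioo (0 : ℝ) D,
      (n : ℝ) * ((n : ℝ) - 1) * (1 - ε) ^ 2 ≤
        ((n : ℝ) - 1) * ((n : ℝ) - 2) * (1 - (f' s) ^ 2) / (f s) ^ 2
          - 2 * ((n : ℝ) - 1) * (f'' s) / (f s))
    (hminA : ∀ s ∈ Set.Ioo (0 : ℝ) D, f' s = 0 → 1 - ε ≤ f s) :
    ∃ s₀ ∈ Set.Ioo (0 : ℝ) D, f' s₀ = 0 ∧ f'' s₀ < 0 ∧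
      ∀ s ∈ Set.Ioo (0 : ℝ) D, f' s = 0 → s = s₀ :=
  unique_minimal_leaf_general n hn ε hε hεn D hD f f' f'' hderiv1 hderiv2 hf'0 hf'D hscal hminA
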